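/- Let n ≥ 2 and let λ, ν ∈ ℂ with ν − λ a nonnegative integer. Then (x_1² + ⋯ + x_{n−1}²)·𝒦_{λ−1,ν+1} = 4ν·𝒦_{λ,ν} − 4(λ − (n−1)/2 + ⌊(ν−λ+1)/2⌋)·𝒦_{λ+1,ν+1} as tempered distributions on ℝ^n. -/

import Mathlib

/-!
Each term of `𝒦_{λ-1,ν+1}` tested on `|x'|² φ` is `± ∂_n^{l-2k} Δ'^{k+1}(|x'|² φ)(0)`.
With the Euler operator `E' = Σ_{j<n} x_j ∂_j`, the commutators `[Δ', |x'|²] = 4E' + 2(n-1)`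
and `[Δ', E'] = 2Δ'` give
`Δ'^{k+1}(|x'|² φ) = |x'|² Δ'^{k+1} φ + 4(k+1) E' Δ'^k φ + 2(k+1)(n-1+2k) Δ'^k φ`.
The first two terms vanish on the `x_n`-axis, along which `∂_n` differentiates, so only the last
one survives at the origin. What remains is a contiguous relation between the coefficients of
`C̃_{l+2}^{α-1}`, `C̃_l^α` and `C̃_l^{α+1}`, where `α = λ - (n-1)/2`.
-/

/-- Partial derivative ∂_p of a complex-valued function on ℝ^n. -/
noncomputable def pd {n : ℕ} (p : Fin n) (f : (Fin n → ℝ) → ℂ) : (Fin n → ℝ) → ℂ :=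
  fun x => fderiv ℝ f x (Pi.single p 1)

/-- Δ' = ∂_1² + ⋯ + ∂_{n−1}², the Laplacian in the first n−1 variables on ℝ^n. -/
noncomputable def lapP {n : ℕ} (f : (Fin n → ℝ) → ℂ) : (Fin n → ℝ) → ℂ :=
  fun x => ∑ j ∈ Finset.univ.filter (fun j : Fin n => (j : ℕ) < n - 1), pd j (pd j f) x

/-- ∂_n, the partial derivative in the last variable on ℝ^n. -/
noncomputable def pdLast {n : ℕ} (f : (Fin n → ℝ) → ℂ) : (Fin n → ℝ) → ℂ :=
  if h : 0 < n then pd ⟨n - 1, by omega⟩ f else 0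

/-- The coefficient of z^{l−2k} in the renormalized Gegenbauer polynomial
C̃_l^α(z) = Σ_{k=0}^{⌊l/2⌋} (−1)^k (∏_{m=⌊(l+1)/2⌋}^{l−k−1}(α+m)) (2z)^{l−2k}/(k!(l−2k)!). -/
noncomputable def gegenCoeff (α : ℂ) (l k : ℕ) : ℂ :=
  (-1 : ℂ) ^ k * (∏ m ∈ Finset.Ico ((l + 1) / 2) (l - k), (α + (m : ℂ))) *
    2 ^ (l - 2 * k) / ((Nat.factorial k : ℂ) * (Nat.factorial (l - 2 * k) : ℂ))

/-- The action on a test function `φ` of the tempered distribution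
`𝒦_{λ,ν} = Σ_{k=0}^{⌊l/2⌋} a_k (−1)^k (Δ')^k ∂_n^{l−2k} δ` on ℝ^n, where `l = ν − λ`
and `a_k` are the coefficients of `C̃_l^{λ−(n−1)/2}`; each `∂` contributes a sign `−1`
and δ evaluates at 0.  By convention `𝒦_{λ,ν} = 0` when `l < 0`. -/
noncomputable def Kact (n : ℕ) (lam : ℂ) (l : ℤ) (φ : (Fin n → ℝ) → ℂ) : ℂ :=
  if 0 ≤ l then
    ∑ k ∈ Finset.range (l.toNat / 2 + 1),
      gegenCoeff (lam - ((n : ℂ) - 1) / 2) l.toNat k *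
        ((-1 : ℂ) ^ k * ((-1 : ℂ) ^ (l.toNat - 2 * k) *
          (pdLast (n := n))^[l.toNat - 2 * k] ((lapP (n := n))^[k] φ) 0))
  else 0

/-- γ(μ, a) := 1 if a is odd, μ + a/2 if a is even. -/
noncomputable def gam (mu : ℂ) (a : ℕ) : ℂ := if a % 2 = 1 then 1 else mu + ((a / 2 : ℕ) : ℂ)

open scoped ContDiff

variable {n : ℕ} {f g : (Fin n → ℝ) → ℂ}

section PartialDeriv

@[fun_prop]
theorem contDiff_pd (hf : ContDiff ℝ ∞ f) (p : Fin n) : ContDiff ℝ ∞ (pd p f) :=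
  (ContinuousLinearMap.apply ℝ ℂ (Pi.single p 1)).contDiff.comp (hf.fderiv_right le_rfl)

theorem pd_add (hf : Differentiable ℝ f) (hg : Differentiable ℝ g) (p : Fin n) :
    pd p (fun x => f x + g x) = fun x => pd p f x + pd p g x := by
  ext x
  simp [pd, fderiv_fun_add (hf x) (hg x)]

theorem pd_const_mul (c : ℂ) (f : (Fin n → ℝ) → ℂ) (p : Fin n) :
    pd p (fun x => c * f x) = fun x => c * pd p f x := by
  ext x
  exact congr($(fderiv_const_smul_field c (f := f)) x (Pi.single p 1))

theorem pd_mul (hf : Differentiable ℝ f) (hg : Differentiable ℝ g) (p : Fin n) :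
    pd p (fun x => f x * g x) = fun x => pd p f x * g x + f x * pd p g x := by
  ext x
  simp [pd, fderiv_fun_mul (hf x) (hg x)]
  ring

theorem pd_sum {ι : Type*} {s : Finset ι} {F : ι → (Fin n → ℝ) → ℂ}
    (hF : ∀ i ∈ s, Differentiable ℝ (F i)) (p : Fin n) :
    pd p (fun x => ∑ i ∈ s, F i x) = fun x => ∑ i ∈ s, pd p (F i) x := by
  ext x
  simp [pd, fderiv_fun_sum fun i hi => hF i hi x]

theorem pd_comm (hf : ContDiff ℝ 2 f) (p q : Fin n) : pd p (pd q f) = pd q (pd p f) := by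
  ext x
  have hd : Differentiable ℝ (fderiv ℝ f) :=
    (hf.fderiv_right (m := 1) (by norm_num)).differentiable one_ne_zero
  have h2 (v w : Fin n → ℝ) :
      fderiv ℝ (fun y => fderiv ℝ f y w) x v = fderiv ℝ (fderiv ℝ f) x v w := by
    simp [fderiv_clm_apply (hd x) (differentiableAt_const w)]
  change fderiv ℝ (fun y => fderiv ℝ f y (Pi.single q 1)) x (Pi.single p 1)
    = fderiv ℝ (fun y => fderiv ℝ f y (Pi.single p 1)) x (Pi.single q 1)
  rw [h2, h2, (hf.contDiffAt.isSymmSndFDerivAt (by simp)).eq]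

end PartialDeriv

section Coordinates

noncomputable def coord (j : Fin n) : (Fin n → ℝ) →L[ℝ] ℂ :=
  Complex.ofRealCLM ∘L ContinuousLinearMap.proj j

@[simp]
theorem coord_apply (j : Fin n) (x : Fin n → ℝ) : coord j x = x j := rfl

theorem pd_coord (p j : Fin n) : pd p (coord j) = fun _ => if j = p then 1 else 0 := by
  ext x
  rw [pd, ContinuousLinearMap.fderiv]
  by_cases h : j = p <;> simp [h]

theorem pd_coord_mul (hg : Differentiable ℝ g) (p j : Fin n) :
    pd p (fun x => coord j x * g x) =
      fun x => (if j = p then g x else 0) + coord j x * pd p g x := by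
  rw [pd_mul (by fun_prop (disch := simp)) hg, pd_coord]
  ext x
  split_ifs <;> simp

variable (n) in
def idxP : Finset (Fin n) := Finset.univ.filter fun j : Fin n => (j : ℕ) < n - 1

theorem card_idxP : (idxP n).card = n - 1 := by
  simp [idxP, Fin.card_filter_val_lt]

variable (n) in
noncomputable def normSqP : (Fin n → ℝ) → ℂ := fun x => ∑ j ∈ idxP n, coord j x ^ 2

noncomputable def eulerP (f : (Fin n → ℝ) → ℂ) : (Fin n → ℝ) → ℂ :=
  fun x => ∑ j ∈ idxP n, coord j x * pd j f x

@[fun_prop]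
theorem contDiff_normSqP : ContDiff ℝ ∞ (normSqP n) := by
  unfold normSqP
  fun_prop

@[fun_prop]
theorem contDiff_eulerP (hf : ContDiff ℝ ∞ f) : ContDiff ℝ ∞ (eulerP f) := by
  unfold eulerP
  fun_prop

@[fun_prop]
theorem contDiff_lapP (hf : ContDiff ℝ ∞ f) : ContDiff ℝ ∞ (lapP f) := by
  unfold lapP
  fun_prop

@[fun_prop]
theorem contDiff_iterate_lapP (hf : ContDiff ℝ ∞ f) (k : ℕ) :
    ContDiff ℝ ∞ (lapP^[k] f) := by
  induction k with
  | zero => exact hf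
  | succ k ih => rw [Function.iterate_succ_apply']; exact contDiff_lapP ih

theorem pd_normSqP_mul (hg : Differentiable ℝ g) {p : Fin n} (hp : p ∈ idxP n) :
    pd p (fun x => normSqP n x * g x) =
      fun x => 2 * (coord p x * g x) + normSqP n x * pd p g x := by
  have h : pd p (normSqP n) = fun x => 2 * coord p x := by
    unfold normSqP
    simp only [sq]
    rw [pd_sum fun j _ => by fun_prop (disch := simp)]
    ext x
    simp only [pd_coord_mul (coord _).differentiable]
    simp [pd_coord, Finset.sum_add_distrib, hp]
    ring
  rw [pd_mul (by fun_prop (disch := simp)) hg, h]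
  ext x
  ring

end Coordinates

section Laplacian

theorem lapP_eq_sum (f : (Fin n → ℝ) → ℂ) :
    lapP f = fun x => ∑ j ∈ idxP n, pd j (pd j f) x := rfl

theorem lapP_add (hf : ContDiff ℝ ∞ f) (hg : ContDiff ℝ ∞ g) :
    lapP (fun x => f x + g x) = fun x => lapP f x + lapP g x := by
  ext x
  simp [lapP_eq_sum, pd_add (hf.differentiable (by simp)) (hg.differentiable (by simp)),
    pd_add ((contDiff_pd hf _).differentiable (by simp))
      ((contDiff_pd hg _).differentiable (by simp)), Finset.sum_add_distrib]

theorem lapP_const_mul (c : ℂ) (f : (Fin n → ℝ) → ℂ) :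
    lapP (fun x => c * f x) = fun x => c * lapP f x := by
  ext x
  simp [lapP_eq_sum, pd_const_mul, Finset.mul_sum]

theorem lapP_normSqP_mul (hn : 1 ≤ n) (hg : ContDiff ℝ ∞ g) :
    lapP (fun x => normSqP n x * g x) =
      fun x => normSqP n x * lapP g x + 4 * eulerP g x + 2 * (n - 1) * g x := by
  have hdg : Differentiable ℝ g := hg.differentiable (by simp)
  have hsq (i) (hi : i ∈ idxP n) : pd i (pd i (fun x => normSqP n x * g x)) =
      fun x => 2 * g x + 4 * (coord i x * pd i g x) + normSqP n x * pd i (pd i g) x := by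
    rw [pd_normSqP_mul hdg hi, pd_add (by fun_prop (disch := simp)) (by fun_prop (disch := simp)),
      pd_const_mul, pd_coord_mul hdg, pd_normSqP_mul (by fun_prop (disch := simp)) hi]
    ext x
    simp
    ring
  ext x
  simp only [lapP_eq_sum, eulerP]
  rw [Finset.sum_congr rfl fun i hi => congrFun (hsq i hi) x]
  simp only [Finset.sum_add_distrib, Finset.sum_const, card_idxP, ← Finset.mul_sum, nsmul_eq_mul,
    Nat.cast_sub hn]
  push_cast
  ring

theorem pd_eulerP (hg : ContDiff ℝ ∞ g) {p : Fin n} (hp : p ∈ idxP n) :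
    pd p (eulerP g) = fun x => pd p g x + eulerP (pd p g) x := by
  unfold eulerP
  rw [pd_sum fun j _ => by fun_prop (disch := simp)]
  ext x
  simp only [pd_coord_mul ((contDiff_pd hg _).differentiable (by simp)), Finset.sum_add_distrib,
    Finset.sum_ite_eq', if_pos hp, pd_comm (hg.of_le (by decide)) p]

theorem eulerP_sum {ι : Type*} {s : Finset ι} {F : ι → (Fin n → ℝ) → ℂ}
    (hF : ∀ i ∈ s, Differentiable ℝ (F i)) :
    eulerP (fun x => ∑ i ∈ s, F i x) = fun x => ∑ i ∈ s, eulerP (F i) x := by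
  ext x
  simp only [eulerP, pd_sum hF, Finset.mul_sum]
  exact Finset.sum_comm

theorem lapP_eulerP (hg : ContDiff ℝ ∞ g) :
    lapP (eulerP g) = fun x => eulerP (lapP g) x + 2 * lapP g x := by
  have hsq (i) (hi : i ∈ idxP n) :
      pd i (pd i (eulerP g)) = fun x => 2 * pd i (pd i g) x + eulerP (pd i (pd i g)) x := by
    rw [pd_eulerP hg hi, pd_add (by fun_prop (disch := simp)) (by fun_prop (disch := simp)),
      pd_eulerP (contDiff_pd hg i) hi]
    ext x
    ring
  ext x
  simp only [lapP_eq_sum,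
    eulerP_sum (F := fun j => pd j (pd j g)) fun j _ => by fun_prop (disch := simp)]
  rw [Finset.sum_congr rfl fun i hi => congrFun (hsq i hi) x]
  simp only [Finset.sum_add_distrib, ← Finset.mul_sum]
  ring

theorem iterate_lapP_normSqP_mul (hn : 1 ≤ n) (hg : ContDiff ℝ ∞ g) (k : ℕ) :
    lapP^[k + 1] (fun x => normSqP n x * g x) = fun x =>
      normSqP n x * lapP^[k + 1] g x + 4 * (k + 1) * eulerP (lapP^[k] g) x
        + 2 * (k + 1) * (n - 1 + 2 * k) * lapP^[k] g x := by
  induction k with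
  | zero =>
    rw [Function.iterate_one, lapP_normSqP_mul hn hg]
    ext x
    simp
  | succ k ih =>
    rw [Function.iterate_succ_apply', ih, lapP_add (by fun_prop) (by fun_prop),
      lapP_add (by fun_prop) (by fun_prop), lapP_const_mul, lapP_const_mul,
      lapP_normSqP_mul hn (by fun_prop), lapP_eulerP (by fun_prop)]
    ext x
    simp only [Function.iterate_succ_apply' lapP]
    push_cast
    ring

end Laplacian

section Axis

variable (n) in
def lastAxis : Set (Fin n → ℝ) := {x | ∀ j ∈ idxP n, x j = 0}

theorem zero_mem_lastAxis : (0 : Fin n → ℝ) ∈ lastAxis n := fun _ _ => rfl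

@[fun_prop]
theorem contDiff_pdLast (hf : ContDiff ℝ ∞ f) : ContDiff ℝ ∞ (pdLast f) := by
  unfold pdLast
  split_ifs
  exacts [contDiff_pd hf _, contDiff_const]

theorem pdLast_zero : pdLast (0 : (Fin n → ℝ) → ℂ) = 0 := by
  unfold pdLast
  split_ifs <;> ext <;> simp [pd]

theorem pdLast_const_mul (c : ℂ) (f : (Fin n → ℝ) → ℂ) :
    pdLast (fun x => c * f x) = fun x => c * pdLast f x := by
  unfold pdLast
  split_ifs
  exacts [pd_const_mul c f _, by ext; simp]

theorem iterate_pdLast_const_mul (c : ℂ) (f : (Fin n → ℝ) → ℂ) (m : ℕ) :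
    pdLast^[m] (fun x => c * f x) = fun x => c * pdLast^[m] f x := by
  induction m generalizing f with
  | zero => rfl
  | succ m ih => rw [Function.iterate_succ_apply, pdLast_const_mul, ih, Function.iterate_succ_apply]

-- `lastAxis n` is stable under translation by `e_n`, so `∂_n f` on it depends only on `f` there.
theorem eqOn_pdLast (hf : Differentiable ℝ f) (hg : Differentiable ℝ g)
    (h : Set.EqOn f g (lastAxis n)) : Set.EqOn (pdLast f) (pdLast g) (lastAxis n) := by
  intro x hx
  unfold pdLast
  split_ifs with hn
  · simp only [pd, ← (hf x).lineDeriv_eq_fderiv, ← (hg x).lineDeriv_eq_fderiv, lineDeriv]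
    congr 1
    ext t
    refine h fun j hj => ?_
    have hje : j ≠ ⟨n - 1, by omega⟩ := by
      rintro rfl
      simp [idxP] at hj
    simp [hx j hj, hje]
  · rfl

theorem eqOn_iterate_pdLast (hf : ContDiff ℝ ∞ f) (hg : ContDiff ℝ ∞ g)
    (h : Set.EqOn f g (lastAxis n)) (m : ℕ) :
    Set.EqOn (pdLast^[m] f) (pdLast^[m] g) (lastAxis n) := by
  induction m generalizing f g with
  | zero => exact h
  | succ m ih =>
    exact ih (contDiff_pdLast hf) (contDiff_pdLast hg)
      (eqOn_pdLast (hf.differentiable (by simp)) (hg.differentiable (by simp)) h)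

theorem normSqP_eq_zero {x : Fin n → ℝ} (hx : x ∈ lastAxis n) : normSqP n x = 0 :=
  Finset.sum_eq_zero fun j hj => by simp [coord, hx j hj]

theorem eulerP_eq_zero (f : (Fin n → ℝ) → ℂ) {x : Fin n → ℝ} (hx : x ∈ lastAxis n) :
    eulerP f x = 0 :=
  Finset.sum_eq_zero fun j hj => by simp [coord, hx j hj]

theorem iterate_pdLast_normSqP_mul_apply_zero (hg : ContDiff ℝ ∞ g) (m : ℕ) :
    pdLast^[m] (fun x => normSqP n x * g x) 0 = 0 := by
  have h : Set.EqOn (fun x => normSqP n x * g x) 0 (lastAxis n) := fun x hx => by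
    simp [normSqP_eq_zero hx]
  rw [eqOn_iterate_pdLast (g := 0) (by fun_prop) contDiff_const h m zero_mem_lastAxis,
    Function.iterate_fixed pdLast_zero]
  rfl

theorem iterate_pdLast_iterate_lapP_normSqP_mul_apply_zero (hn : 1 ≤ n) (hg : ContDiff ℝ ∞ g)
    (k m : ℕ) :
    pdLast^[m] (lapP^[k + 1] (fun x => normSqP n x * g x)) 0 =
      2 * (k + 1) * (n - 1 + 2 * k) * pdLast^[m] (lapP^[k] g) 0 := by
  have h : Set.EqOn (lapP^[k + 1] (fun x => normSqP n x * g x))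
      (fun x => 2 * (k + 1) * (n - 1 + 2 * k) * lapP^[k] g x) (lastAxis n) := fun x hx => by
    simp [iterate_lapP_normSqP_mul hn hg, normSqP_eq_zero hx, eulerP_eq_zero _ hx]
  rw [eqOn_iterate_pdLast (by fun_prop) (by fun_prop) h m zero_mem_lastAxis,
    iterate_pdLast_const_mul]

end Axis

section Gegenbauer

theorem gegenCoeff_sub_one_add_two_succ (α : ℂ) {L k : ℕ} (hk : 2 * k ≤ L) :
    (k + 1) * gegenCoeff (α - 1) (L + 2) (k + 1) = -gegenCoeff α L k := by
  have hprod : ∏ m ∈ Finset.Ico ((L + 2 + 1) / 2) (L + 2 - (k + 1)), (α - 1 + m) =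
      ∏ m ∈ Finset.Ico ((L + 1) / 2) (L - k), (α + m) := by
    rw [show (L + 2 + 1) / 2 = (L + 1) / 2 + 1 by omega, show L + 2 - (k + 1) = L - k + 1 by omega,
      ← Finset.prod_Ico_add' _ _ _ 1]
    push_cast
    ring_nf
  rw [gegenCoeff, gegenCoeff, hprod, show L + 2 - 2 * (k + 1) = L - 2 * k by omega,
    Nat.factorial_succ]
  push_cast
  field_simp
  ring

theorem add_mul_gegenCoeff_add_one (α : ℂ) {L k : ℕ} (hk : 2 * k ≤ L) :
    (α + ((L + 1) / 2 : ℕ)) * gegenCoeff (α + 1) L k = (α + L - k) * gegenCoeff α L k := by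
  have hprod :
      (α + ((L + 1) / 2 : ℕ)) * ∏ m ∈ Finset.Ico ((L + 1) / 2) (L - k), (α + 1 + m) =
      (α + L - k) * ∏ m ∈ Finset.Ico ((L + 1) / 2) (L - k), (α + m) := by
    have hshift : ∏ m ∈ Finset.Ico ((L + 1) / 2) (L - k), (α + 1 + m) =
        ∏ m ∈ Finset.Ico ((L + 1) / 2 + 1) (L - k + 1), (α + m) := by
      rw [← Finset.prod_Ico_add' _ _ _ 1]
      push_cast
      ring_nf
    rw [hshift, ← Finset.prod_eq_prod_Ico_succ_bot (by omega) fun m : ℕ => α + m,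
      Finset.prod_Ico_succ_top (by omega), Nat.cast_sub (by omega : k ≤ L)]
    ring
  simp only [gegenCoeff]
  linear_combination ((-1) ^ k * 2 ^ (L - 2 * k) / ((k.factorial : ℂ) * (L - 2 * k).factorial)) *
    hprod

end Gegenbauer

section Kact

theorem Kact_natCast (n : ℕ) (lam : ℂ) (L : ℕ) (φ : (Fin n → ℝ) → ℂ) :
    Kact n lam L φ = ∑ k ∈ Finset.range (L / 2 + 1),
      gegenCoeff (lam - ((n : ℂ) - 1) / 2) L k *
        ((-1) ^ k * ((-1) ^ (L - 2 * k) * pdLast^[L - 2 * k] (lapP^[k] φ) 0)) := by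
  simp [Kact]

theorem Kact_add_two_normSqP_mul (hn : 1 ≤ n) (hg : ContDiff ℝ ∞ g) (lam : ℂ) (L : ℕ) :
    Kact n lam (L + 2 : ℕ) (fun x => normSqP n x * g x) = ∑ k ∈ Finset.range (L / 2 + 1),
      gegenCoeff (lam - ((n : ℂ) - 1) / 2) (L + 2) (k + 1) *
        ((-1) ^ (k + 1) * ((-1) ^ (L - 2 * k) *
          (2 * (k + 1) * (n - 1 + 2 * k) * pdLast^[L - 2 * k] (lapP^[k] g) 0))) := by
  rw [Kact_natCast, show (L + 2) / 2 + 1 = L / 2 + 1 + 1 by omega, Finset.sum_range_succ',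
    Function.iterate_zero_apply, iterate_pdLast_normSqP_mul_apply_zero hg]
  simp only [mul_zero, add_zero]
  refine Finset.sum_congr rfl fun k hk => ?_
  rw [show L + 2 - 2 * (k + 1) = L - 2 * k by omega,
    iterate_pdLast_iterate_lapP_normSqP_mul_apply_zero hn hg]

end Kact

/-- `(x_1² + ⋯ + x_{n−1}²)·𝒦_{λ−1,ν+1} = 4ν·𝒦_{λ,ν} − 4(λ − (n−1)/2 + ⌊(ν−λ+1)/2⌋)·𝒦_{λ+1,ν+1}`
as tempered distributions on ℝ^n, tested against an arbitrary Schwartz function `φ`. -/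
theorem stmt16 (n : ℕ) (hn : 2 ≤ n) (lam nu : ℂ) (l : ℤ) (hl : 0 ≤ l)
    (hln : nu - lam = (l : ℂ)) (φ : SchwartzMap (Fin n → ℝ) ℂ) :
    Kact n (lam - 1) (l + 2)
        (fun x => ((∑ k ∈ Finset.univ.filter (fun k : Fin n => (k : ℕ) < n - 1),
            (x k) ^ 2 : ℝ) : ℂ) * φ x)
      = 4 * nu * Kact n lam l ⇑φ
        - 4 * (lam - ((n : ℂ) - 1) / 2 + (((l + 1) / 2 : ℤ) : ℂ)) *
            Kact n (lam + 1) l ⇑φ := by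
  obtain ⟨L, rfl⟩ := Int.eq_ofNat_of_zero_le hl
  have hnu : nu = lam + L := by linear_combination hln
  have hmul : (fun x => ((∑ k ∈ Finset.univ.filter (fun k : Fin n => (k : ℕ) < n - 1),
      (x k) ^ 2 : ℝ) : ℂ) * φ x) = fun x => normSqP n x * φ x := by
    ext x
    simp [normSqP, coord, idxP]
  rw [hmul, show (L : ℤ) + 2 = ((L + 2 : ℕ) : ℤ) by push_cast; ring,
    Kact_add_two_normSqP_mul (by omega) (φ.smooth ⊤), Kact_natCast, Kact_natCast,
    show (((L + 1) / 2 : ℤ) : ℂ) = ((L + 1) / 2 : ℕ) by norm_cast,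
    Finset.mul_sum, Finset.mul_sum, ← Finset.sum_sub_distrib]
  refine Finset.sum_congr rfl fun k hk => ?_
  have hk : 2 * k ≤ L := by
    rw [Finset.mem_range] at hk
    omega
  set α := lam - ((n : ℂ) - 1) / 2
  set S := (-1) ^ k * ((-1) ^ (L - 2 * k) * pdLast^[L - 2 * k] (lapP^[k] ⇑φ) 0)
  rw [show lam - 1 - ((n : ℂ) - 1) / 2 = α - 1 by ring,
    show lam + 1 - ((n : ℂ) - 1) / 2 = α + 1 by ring]
  linear_combination (-2 * (n - 1 + 2 * k) * S) * gegenCoeff_sub_one_add_two_succ α hk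
    + 4 * S * add_mul_gegenCoeff_add_one α hk - 4 * gegenCoeff α L k * S * hnu
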